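/- Let n be a positive integer. Then Σ_{q=0}^{n−1} A_q* A_q = n·I, where I is the n²×n² identity matrix. -/

import Mathlib

open MeasureTheory ProbabilityTheory Matrix

noncomputable section

/-- Cyclic translation on `ℂⁿ`: `(T h) q = h (q-1)`. -/
def Tmat (n : ℕ) : Matrix (Fin n) (Fin n) ℂ :=
  fun q j => if (j : ℕ) = ((q : ℕ) + (n - 1)) % n then 1 else 0

/-- Modulation on `ℂⁿ`: `(M h) q = exp(2πiq/n) h q`. -/
def Mmat (n : ℕ) : Matrix (Fin n) (Fin n) ℂ :=
  Matrix.diagonal fun q => Complex.exp (2 * Real.pi * Complex.I * (q : ℕ) / n)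

/-- Time-frequency shift `π(λ) = M^ℓ T^k` for `λ = (k, ℓ)`. -/
def pimat (n : ℕ) (lam : Fin n × Fin n) : Matrix (Fin n) (Fin n) ℂ :=
  Mmat n ^ (lam.2 : ℕ) * Tmat n ^ (lam.1 : ℕ)

/-- The matrix `A_q = (T^q | M T^q | ⋯ | M^{n-1} T^q)`: its column `λ = (k,ℓ)` is
the `k`-th column of `M^ℓ T^q`. -/
def Amat (n : ℕ) (q : Fin n) : Matrix (Fin n) (Fin n × Fin n) ℂ :=
  fun r lam => (Mmat n ^ (lam.2 : ℕ) * Tmat n ^ (q : ℕ)) r lam.1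

/-- The matrix `W_{q',q} = A_{q'}^* A_q` for `q' ≠ q`, and `0` for `q' = q`. -/
def Wmat (n : ℕ) (q' q : Fin n) : Matrix (Fin n × Fin n) (Fin n × Fin n) ℂ :=
  if q' = q then 0 else (Amat n q')ᴴ * Amat n q

/-- The matrix `B(x)` with entries `B(x)_{q',q} = x^* W_{q',q} x`. -/
def Bmat (n : ℕ) (x : Fin n × Fin n → ℂ) : Matrix (Fin n) (Fin n) ℂ :=
  fun q' q => star x ⬝ᵥ (Wmat n q' q).mulVec x

/-- Euclidean (`ℓ₂`) norm of a finitely supported complex vector. -/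
def euclNorm {ι : Type*} [Fintype ι] (x : ι → ℂ) : ℝ :=
  Real.sqrt (∑ i, ‖x i‖ ^ 2)

/-- Frobenius norm of a matrix. -/
def frobNorm {ι κ : Type*} [Fintype ι] [Fintype κ] (A : Matrix ι κ ℂ) : ℝ :=
  Real.sqrt (∑ i, ∑ j, ‖A i j‖ ^ 2)

/-- Operator (`ℓ₂ → ℓ₂`) norm of a matrix. -/
def opNorm {ι κ : Type*} [Fintype ι] [Fintype κ] (A : Matrix ι κ ℂ) : ℝ :=
  sSup {c : ℝ | ∃ x : κ → ℂ, euclNorm x ≤ 1 ∧ c = euclNorm (A.mulVec x)}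

open scoped Classical in
/-- Number of nonzero entries of a vector. -/
def sparsity {ι : Type*} [Fintype ι] (x : ι → ℂ) : ℕ :=
  (Finset.univ.filter fun j => x j ≠ 0).card

/-- `T_s`: unit-norm `s`-sparse vectors in `ℂ^{n²}`. -/
def sparseSphere (n s : ℕ) : Set (Fin n × Fin n → ℂ) :=
  {x | euclNorm x = 1 ∧ sparsity x ≤ s}

/-- Covering number: minimal cardinality of a subset `S ⊆ T` such that every point of `T`
is within distance `u` (w.r.t. `d`) of a point of `S`. -/
def coveringNumber {α : Type*} (T : Set α) (d : α → α → ℝ) (u : ℝ) : ℝ :=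
  sInf {N : ℝ | ∃ S : Finset α, ↑S ⊆ T ∧ (∀ x ∈ T, ∃ y ∈ S, d x y ≤ u) ∧ N = S.card}

/-- Restricted isometry constant of order `s` of the matrix `A`. -/
def ripConst {ι κ : Type*} [Fintype ι] [Fintype κ] (A : Matrix ι κ ℂ) (s : ℕ) : ℝ :=
  sInf {δ : ℝ | 0 ≤ δ ∧ ∀ x : κ → ℂ, sparsity x ≤ s →
    (1 - δ) * euclNorm x ^ 2 ≤ euclNorm (A.mulVec x) ^ 2 ∧
      euclNorm (A.mulVec x) ^ 2 ≤ (1 + δ) * euclNorm x ^ 2}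

/-- Gabor synthesis matrix: the column indexed by `λ` is `π(λ) g`. -/
def gaborMatrix (n : ℕ) (g : Fin n → ℂ) : Matrix (Fin n) (Fin n × Fin n) ℂ :=
  fun r lam => (pimat n lam).mulVec g r

/-- The Rademacher distribution on `ℂ`: values `±1` with probability `1/2` each. -/
def rademacherMeasure : Measure ℂ :=
  (2 : ENNReal)⁻¹ • (Measure.dirac 1 + Measure.dirac (-1))

/-- The Steinhaus distribution: uniform distribution on the complex unit circle. -/
def steinhausMeasure : Measure ℂ :=
  Measure.map (fun t : ℝ => Complex.exp (2 * Real.pi * t * Complex.I))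
    (volume.restrict (Set.Ioc (0 : ℝ) 1))

/-- `ε` is a Rademacher sequence: independent entries, each `±1` with probability 1/2. -/
def IsRademacherVec {Ω : Type*} [MeasurableSpace Ω] (μ : Measure Ω) {n : ℕ}
    (ε : Ω → Fin n → ℂ) : Prop :=
  iIndepFun (fun q ω => ε ω q) μ ∧
    ∀ q, μ.map (fun ω => ε ω q) = rademacherMeasure

/-- `ε` is a Steinhaus sequence: independent entries, each uniform on the unit circle. -/
def IsSteinhausVec {Ω : Type*} [MeasurableSpace Ω] (μ : Measure Ω) {n : ℕ}
    (ε : Ω → Fin n → ℂ) : Prop :=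
  iIndepFun (fun q ω => ε ω q) μ ∧
    ∀ q, μ.map (fun ω => ε ω q) = steinhausMeasure

end

/-! The `(ℓ', ℓ)` block of `A_qᴴ A_q` is `(T^q)ᴴ D T^q` with the diagonal matrix
`D = (M^ℓ')ᴴ M^ℓ`. Averaging a diagonal matrix over all cyclic shifts `T^q` yields its trace
times the identity, and `trace ((M^ℓ')ᴴ M^ℓ) = ∑_r ζ^(r (ℓ - ℓ'))`, with `ζ = exp (2πi/n)`, is
`n` if `ℓ' = ℓ` and `0` otherwise, by the orthogonality of the characters `r ↦ ζ^(r ℓ)`. -/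

open Complex Finset

theorem geom_sum_eq_ite_of_pow_eq_one {K : Type*} [Field K] [DecidableEq K] {w : K} {n : ℕ}
    (hw : w ^ n = 1) : ∑ i ∈ range n, w ^ i = if w = 1 then (n : K) else 0 := by
  split_ifs with h
  · simp [h]
  · rw [geom_sum_eq h, hw, sub_self, zero_div]

theorem IsPrimitiveRoot.sum_star_pow_pow_mul_pow_pow {ζ : ℂ} {n : ℕ} (hζ : IsPrimitiveRoot ζ n)
    (l' l : Fin n) :
    ∑ r : Fin n, star ((ζ ^ (r : ℕ)) ^ (l' : ℕ)) * (ζ ^ (r : ℕ)) ^ (l : ℕ) =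
      if l' = l then (n : ℂ) else 0 := by
  have hn : n ≠ 0 := Fin.pos l |>.ne'
  have hstar : star ζ = ζ⁻¹ := (inv_eq_conj (hζ.norm'_eq_one hn)).symm
  set w := (ζ ^ (l' : ℕ))⁻¹ * ζ ^ (l : ℕ)
  have hterm (r : ℕ) : star ((ζ ^ r) ^ (l' : ℕ)) * (ζ ^ r) ^ (l : ℕ) = w ^ r := by
    simp only [star_pow, hstar, w, mul_pow, inv_pow, pow_right_comm ζ r]
  have hw_pow : w ^ n = 1 := by
    simp only [w, mul_pow, inv_pow, pow_right_comm ζ _ n, hζ.pow_eq_one, one_pow, inv_one, one_mul]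
  have hw_one : w = 1 ↔ l' = l := by
    rw [inv_mul_eq_one₀ (pow_ne_zero _ (hζ.ne_zero hn)), Fin.ext_iff]
    exact ⟨fun h => hζ.pow_inj l'.isLt l.isLt h, fun h => h ▸ rfl⟩
  simp only [hterm]
  rw [Fin.sum_univ_eq_sum_range (w ^ ·), geom_sum_eq_ite_of_pow_eq_one hw_pow]
  exact if_congr hw_one rfl rfl

theorem Mmat_pow (n l : ℕ) :
    Mmat n ^ l = diagonal fun r : Fin n => (exp (2 * Real.pi * I / n) ^ (r : ℕ)) ^ l := by
  rw [Mmat, diagonal_pow]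
  congr with r
  rw [← exp_nat_mul]
  ring_nf

theorem trace_conjTranspose_Mmat_pow_mul_Mmat_pow {n : ℕ} (l' l : Fin n) :
    trace ((Mmat n ^ (l' : ℕ))ᴴ * Mmat n ^ (l : ℕ)) = if l' = l then (n : ℂ) else 0 := by
  rw [Mmat_pow, Mmat_pow, diagonal_conjTranspose, diagonal_mul_diagonal, trace_diagonal]
  exact (isPrimitiveRoot_exp n (Fin.pos l).ne').sum_star_pow_pow_mul_pow_pow l' l

theorem isDiag_conjTranspose_Mmat_pow_mul_Mmat_pow (n l' l : ℕ) :
    ((Mmat n ^ l')ᴴ * Mmat n ^ l).IsDiag := by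
  rw [Mmat_pow, Mmat_pow, diagonal_conjTranspose, diagonal_mul_diagonal]
  exact isDiag_diagonal _

section Translation

variable {n : ℕ} [NeZero n]

open Fin.NatCast

theorem Tmat_apply (r k : Fin n) : Tmat n r k = if k = r - 1 then 1 else 0 := by
  have hval : ((r - 1 : Fin n) : ℕ) = ((r : ℕ) + (n - 1)) % n := by
    -- `(1 : Fin 1) = 0`, so `n = 1` is separate
    rcases (NeZero.one_le : 1 ≤ n).eq_or_lt with rfl | h
    · simp
    · rw [Fin.sub_def, Fin.val_one', Nat.mod_eq_of_lt h, add_comm]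
  simp only [Tmat, Fin.ext_iff, hval]

theorem Tmat_pow_apply (m : ℕ) (r k : Fin n) :
    (Tmat n ^ m) r k = if r = k + (m : Fin n) then 1 else 0 := by
  induction m generalizing r with
  | zero => simp [one_apply]
  | succ m ih =>
    simp only [pow_succ', mul_apply, Tmat_apply, ite_mul, one_mul, zero_mul, sum_ite_eq',
      mem_univ, if_true, ih, Nat.cast_succ, sub_eq_iff_eq_add, add_assoc]

theorem sum_star_Tmat_pow_apply_mul_Tmat_pow_apply (r k' k : Fin n) :
    ∑ q : Fin n, star ((Tmat n ^ (q : ℕ)) r k') * (Tmat n ^ (q : ℕ)) r k =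
      if k' = k then 1 else 0 := by
  simp only [Tmat_pow_apply, Fin.cast_val_eq_self, apply_ite (star : ℂ → ℂ), star_one,
    star_zero, ite_mul, one_mul, zero_mul, eq_comm (a := r), ← eq_sub_iff_add_eq', sum_ite_eq',
    mem_univ, if_true, sub_right_inj]

theorem sum_conjTranspose_Tmat_pow_mul_mul_Tmat_pow {D : Matrix (Fin n) (Fin n) ℂ}
    (hD : D.IsDiag) :
    ∑ q : Fin n, (Tmat n ^ (q : ℕ))ᴴ * D * Tmat n ^ (q : ℕ) = D.trace • 1 := by
  obtain ⟨d, rfl⟩ : ∃ d, diagonal d = D := ⟨D.diag, hD.diagonal_diag⟩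
  ext k' k
  calc (∑ q : Fin n, (Tmat n ^ (q : ℕ))ᴴ * diagonal d * Tmat n ^ (q : ℕ)) k' k
      = ∑ r, d r * ∑ q : Fin n, star ((Tmat n ^ (q : ℕ)) r k') * (Tmat n ^ (q : ℕ)) r k := by
        simp only [Matrix.sum_apply, mul_apply (N := Tmat n ^ _), mul_diagonal, conjTranspose_apply,
          mul_sum]
        rw [sum_comm]
        exact sum_congr rfl fun r _ => sum_congr rfl fun q _ => by ring
    _ = ((diagonal d).trace • (1 : Matrix (Fin n) (Fin n) ℂ)) k' k := by
        simp only [sum_star_Tmat_pow_apply_mul_Tmat_pow_apply, trace_diagonal, Matrix.smul_apply,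
          one_apply, smul_eq_mul, mul_ite, mul_one, mul_zero, sum_ite_irrel, sum_const_zero]

end Translation

theorem conjTranspose_Amat_mul_Amat_apply {n : ℕ} (q k' l' k l : Fin n) :
    ((Amat n q)ᴴ * Amat n q) (k', l') (k, l) =
      ((Tmat n ^ (q : ℕ))ᴴ * ((Mmat n ^ (l' : ℕ))ᴴ * Mmat n ^ (l : ℕ)) * Tmat n ^ (q : ℕ))
        k' k := by
  rw [mul_assoc, mul_assoc, ← mul_assoc, ← conjTranspose_mul]
  rfl

theorem sum_Amat_conjTranspose_mul_general (n : ℕ) :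
    ∑ q : Fin n, (Amat n q)ᴴ * Amat n q =
      (n : ℂ) • (1 : Matrix (Fin n × Fin n) (Fin n × Fin n) ℂ) := by
  ext ⟨k', l'⟩ ⟨k, l⟩
  have : NeZero n := NeZero.of_pos k.pos
  simp only [Matrix.sum_apply, conjTranspose_Amat_mul_Amat_apply]
  rw [← Matrix.sum_apply, sum_conjTranspose_Tmat_pow_mul_mul_Tmat_pow
    (isDiag_conjTranspose_Mmat_pow_mul_Mmat_pow n _ _), trace_conjTranspose_Mmat_pow_mul_Mmat_pow]
  simp only [Matrix.smul_apply, one_apply, Prod.mk.injEq, ite_and, smul_eq_mul]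
  split_ifs <;> simp

/-- `∑_q A_q^* A_q = n · I` (Lemma 6, eq. (17)). -/
theorem sum_Amat_conjTranspose_mul (n : ℕ) (hn : 0 < n) :
    ∑ q : Fin n, (Amat n q)ᴴ * Amat n q =
      (n : ℂ) • (1 : Matrix (Fin n × Fin n) (Fin n × Fin n) ℂ) :=
  sum_Amat_conjTranspose_mul_general n
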